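/- Let I' : C₀([0,1]; ℝ^d) → [0,∞] be defined by I'(h) = ∫₀¹ (1/2)⟨Σ⁻¹ ḣ(t), ḣ(t)⟩ dt if h is absolutely continuous with h(0)=0 and square-integrable derivative, and I'(h)=+∞ otherwise, where Σ⁻¹ is symmetric positive definite. Then the sublevel set K = {h : I'(h) ≤ 1} is a compact subset of C₀([0,1]; ℝ^d) with the uniform norm. -/

import Mathlib

open Matrix MeasureTheory intervalIntegral
open RealInnerProductSpace ENNReal NNReal

noncomputable section
variable (d : ℕ)
def μ01 : Measure ℝ := volume.restrict (Set.Icc 0 1)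
instance : IsFiniteMeasure (μ01) := by
  constructor; rw [μ01, Measure.restrict_apply_univ]; exact measure_Icc_lt_top
abbrev Esp := EuclideanSpace ℝ (Fin d)
abbrev Hsp := Lp (Esp d) 2 (μ01)
def indParam (t : Set.Icc (0:ℝ) 1) (i : Fin d) : Hsp d :=
  indicatorConstLp (s := Set.Ioc 0 (t:ℝ)) 2 measurableSet_Ioc (measure_lt_top _ _).ne
    (EuclideanSpace.single i (1:ℝ) : Esp d)
def Phi (φ : WeakDual ℝ (Hsp d)) : Set.Icc (0:ℝ) 1 → Esp d :=
  fun t => ∑ i, φ (indParam d t i) • (EuclideanSpace.single i (1:ℝ) : Esp d)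
lemma continuous_Phi : Continuous (Phi d) := by
  refine continuous_pi fun t => ?_
  exact continuous_finset_sum _ fun i _ =>
    (WeakDual.eval_continuous (indParam d t i)).smul continuous_const
lemma Phi_toDual (G : Hsp d) (t : Set.Icc (0:ℝ) 1) :
    Phi d (InnerProductSpace.toDual ℝ (Hsp d) G) t
      = ∫ x in Set.Ioc (0:ℝ) (t:ℝ), G x ∂(μ01) := by
  have hcoord : ∀ i, (InnerProductSpace.toDual ℝ (Hsp d) G) (indParam d t i)
      = (∫ x in Set.Ioc (0:ℝ) (t:ℝ), G x ∂(μ01)) i := by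
    intro i
    rw [InnerProductSpace.toDual_apply_apply, real_inner_comm, indParam,
      MeasureTheory.L2.inner_indicatorConstLp_eq_inner_setIntegral ℝ,
      EuclideanSpace.inner_single_left]
    simp
  simp only [Phi]
  refine (Finset.sum_congr rfl fun i _ =>
    congrArg (· • (EuclideanSpace.single i (1:ℝ) : Esp d)) (hcoord i)).trans ?_
  conv_rhs => rw [← (EuclideanSpace.basisFun (Fin d) ℝ).sum_repr
    (∫ x in Set.Ioc (0:ℝ) (t:ℝ), G x ∂(μ01))]
  simp [EuclideanSpace.basisFun_apply, EuclideanSpace.basisFun_repr]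


open intervalIntegral in
lemma setIntegral_eq_interval {Y : Type*} [NormedAddCommGroup Y] [NormedSpace ℝ Y] (f : ℝ → Y) {a b : ℝ} (h0 : 0 ≤ a) (hab : a ≤ b) (hb : b ≤ 1) :
    ∫ x in Set.Ioc a b, f x ∂(μ01) = ∫ s in a..b, f s := by
  rw [intervalIntegral.integral_of_le hab, μ01, Measure.restrict_restrict measurableSet_Ioc,
    Set.inter_eq_self_of_subset_left]
  intro x hx
  exact ⟨h0.trans hx.1.le, hx.2.trans hb⟩

lemma integrableOn_L2 (G : Hsp d) (s : Set ℝ) : IntegrableOn (fun x => G x) s (μ01) :=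
  ((Lp.memLp G).integrable one_le_two).integrableOn

lemma holder_bound (G : Hsp d) {a b : ℝ} (hab : a ≤ b) :
    ‖∫ x in Set.Ioc a b, G x ∂(μ01)‖ ≤ ‖G‖ * Real.sqrt (b - a) := by
  set v : Esp d := ∫ x in Set.Ioc a b, G x ∂(μ01) with hv
  have hind : (⟪(indicatorConstLp (s := Set.Ioc a b) 2 measurableSet_Ioc
      (measure_lt_top _ _).ne v : Hsp d), G⟫) = ⟪v, v⟫ :=
    MeasureTheory.L2.inner_indicatorConstLp_eq_inner_setIntegral ℝ _ _ _ _
  have hnormind : ‖(indicatorConstLp (s := Set.Ioc a b) 2 measurableSet_Ioc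
      (measure_lt_top _ _).ne v : Hsp d)‖ ≤ ‖v‖ * Real.sqrt (b - a) := by
    rw [norm_indicatorConstLp (by norm_num) (by norm_num)]
    gcongr
    have hle : (μ01) (Set.Ioc a b) ≤ ENNReal.ofReal (b - a) := by
      rw [μ01, Measure.restrict_apply measurableSet_Ioc]
      refine le_trans (measure_mono Set.inter_subset_left) ?_
      simp [Real.volume_Ioc]
    have h2 : ((μ01) (Set.Ioc a b)).toReal ≤ b - a :=
      le_trans (ENNReal.toReal_mono ENNReal.ofReal_ne_top hle) (by
        rw [ENNReal.toReal_ofReal (by linarith)])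
    calc ((μ01) (Set.Ioc a b)).toReal ^ (1 / (2:ℝ≥0∞).toReal)
        = Real.sqrt ((μ01) (Set.Ioc a b)).toReal := by
          rw [Real.sqrt_eq_rpow]; norm_num
      _ ≤ Real.sqrt (b - a) := Real.sqrt_le_sqrt h2
  have hcs : ⟪v, v⟫ ≤ ‖v‖ * Real.sqrt (b - a) * ‖G‖ := by
    rw [← hind]
    refine le_trans (real_inner_le_norm _ _) ?_
    exact mul_le_mul_of_nonneg_right hnormind (norm_nonneg _)
  rw [real_inner_self_eq_norm_sq] at hcs
  rcases eq_or_lt_of_le (norm_nonneg v) with h0 | h0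
  · rw [← h0]; positivity
  · nlinarith [hcs]

lemma Phi_sub (G : Hsp d) (t u : Set.Icc (0:ℝ) 1) (h : (u:ℝ) ≤ t) :
    Phi d (InnerProductSpace.toDual ℝ (Hsp d) G) t - Phi d (InnerProductSpace.toDual ℝ (Hsp d) G) u
      = ∫ x in Set.Ioc (u:ℝ) (t:ℝ), G x ∂(μ01) := by
  rw [Phi_toDual, Phi_toDual]
  have hunion : Set.Ioc (0:ℝ) (u:ℝ) ∪ Set.Ioc (u:ℝ) (t:ℝ) = Set.Ioc (0:ℝ) (t:ℝ) :=
    Set.Ioc_union_Ioc_eq_Ioc u.2.1 h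
  rw [← hunion, MeasureTheory.setIntegral_union (Set.Ioc_disjoint_Ioc_of_le le_rfl)
    measurableSet_Ioc (integrableOn_L2 d G _) (integrableOn_L2 d G _)]
  abel

lemma Phi_dist (G : Hsp d) (t u : Set.Icc (0:ℝ) 1) :
    dist (Phi d (InnerProductSpace.toDual ℝ (Hsp d) G) t)
         (Phi d (InnerProductSpace.toDual ℝ (Hsp d) G) u)
      ≤ ‖G‖ * Real.sqrt (dist (t:ℝ) (u:ℝ)) := by
  rcases le_total (u:ℝ) (t:ℝ) with h | h
  · rw [dist_eq_norm, Phi_sub d G t u h]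
    calc _ ≤ ‖G‖ * Real.sqrt ((t:ℝ) - u) := holder_bound d G h
    _ = _ := by rw [Real.dist_eq, abs_of_nonneg (by linarith)]
  · rw [dist_eq_norm, norm_sub_rev, Phi_sub d G u t h]
    calc _ ≤ ‖G‖ * Real.sqrt ((u:ℝ) - t) := holder_bound d G h
    _ = _ := by rw [Real.dist_eq, abs_of_nonpos (by linarith), neg_sub]

lemma continuous_Phi_toDual (G : Hsp d) :
    Continuous fun t => Phi d (InnerProductSpace.toDual ℝ (Hsp d) G) t := by
  rw [Metric.continuous_iff]
  intro t ε hε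
  refine ⟨(ε / (‖G‖ + 1)) ^ 2, by positivity, fun u hu => ?_⟩
  have h1 : dist (Phi d (InnerProductSpace.toDual ℝ (Hsp d) G) u)
      (Phi d (InnerProductSpace.toDual ℝ (Hsp d) G) t)
      ≤ ‖G‖ * Real.sqrt (dist (u:ℝ) (t:ℝ)) := Phi_dist d G u t
  have hGpos : (0:ℝ) < ‖G‖ + 1 := by positivity
  have h2 : Real.sqrt (dist (u:ℝ) (t:ℝ)) < ε / (‖G‖ + 1) := by
    have : dist (u:ℝ) (t:ℝ) < (ε / (‖G‖ + 1)) ^ 2 := by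
      refine lt_of_le_of_lt ?_ hu
      rw [Subtype.dist_eq u t]
    calc Real.sqrt (dist (u:ℝ) (t:ℝ)) < Real.sqrt ((ε / (‖G‖ + 1)) ^ 2) :=
          Real.sqrt_lt_sqrt dist_nonneg this
      _ = ε / (‖G‖ + 1) := by rw [Real.sqrt_sq (by positivity)]
  calc dist _ _ ≤ ‖G‖ * Real.sqrt (dist (u:ℝ) (t:ℝ)) := h1
    _ ≤ (‖G‖ + 1) * Real.sqrt (dist (u:ℝ) (t:ℝ)) := by
        have := Real.sqrt_nonneg (dist (u:ℝ) (t:ℝ)); nlinarith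
    _ < (‖G‖ + 1) * (ε / (‖G‖ + 1)) := by
        exact mul_lt_mul_of_pos_left h2 hGpos
    _ = ε := by field_simp

section Mat
open Matrix
open scoped MatrixOrder
variable (A : Matrix (Fin d) (Fin d) ℝ) (hpos : A.PosDef)

def Bmat : Matrix (Fin d) (Fin d) ℝ := let _ := hpos; CFC.sqrt A

lemma Bmat_mul_self : Bmat d A hpos * Bmat d A hpos = A := CFC.sqrt_mul_sqrt_self A hpos.posSemidef.nonneg

lemma Bmat_isUnit : IsUnit (Bmat d A hpos) := by
  have hdet : det (Bmat d A hpos) * det (Bmat d A hpos) = det A := by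
    rw [← Matrix.det_mul, Bmat_mul_self]
  have : det (Bmat d A hpos) ≠ 0 := by
    intro h; rw [h, mul_zero] at hdet; exact (hpos.det_pos.ne' hdet.symm).elim
  exact (Matrix.isUnit_iff_isUnit_det _).2 (IsUnit.mk0 _ this)

lemma Binv_mul : (Bmat d A hpos)⁻¹ * Bmat d A hpos = 1 :=
  Matrix.nonsing_inv_mul _ (by
    have := (Matrix.isUnit_iff_isUnit_det _).1 (Bmat_isUnit d A hpos)
    exact this)

lemma inner_BB_gen (B : Matrix (Fin d) (Fin d) ℝ) (hB : B.IsHermitian) (hBB : B * B = A)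
    (x : Esp d) :
    ⟪Matrix.toEuclideanCLM (𝕜 := ℝ) B x, Matrix.toEuclideanCLM (𝕜 := ℝ) B x⟫
    = A.mulVec (WithLp.equiv 2 (Fin d → ℝ) x) ⬝ᵥ (WithLp.equiv 2 (Fin d → ℝ) x) := by
  have happ : ∀ y : EuclideanSpace ℝ (Fin d), WithLp.equiv 2 (Fin d → ℝ)
      (Matrix.toEuclideanCLM (𝕜 := ℝ) B y) = B.mulVec (WithLp.equiv 2 (Fin d → ℝ) y) :=
    fun y => Matrix.ofLp_toEuclideanCLM B y
  rw [PiLp.inner_apply]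
  set x' := WithLp.equiv 2 (Fin d → ℝ) x with hx'
  have h1 : ∀ i, (Matrix.toEuclideanCLM (𝕜 := ℝ) B x) i = B.mulVec x' i := by
    intro i; rw [← happ x]; rfl
  simp only [h1, RCLike.inner_apply, conj_trivial]
  have : B.mulVec x' ⬝ᵥ B.mulVec x' = A.mulVec x' ⬝ᵥ x' := by
    rw [← hBB, ← Matrix.mulVec_mulVec]
    rw [Matrix.dotProduct_mulVec]
    congr 1
    have hBt : Bᵀ = B := by
      have := hB; rwa [Matrix.IsHermitian, Matrix.conjTranspose_eq_transpose_of_trivial] at this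
    calc (B *ᵥ x') ᵥ* B = (B *ᵥ x') ᵥ* (Bᵀ)ᵀ := by rw [Matrix.transpose_transpose]
      _ = Bᵀ *ᵥ (B *ᵥ x') := Matrix.vecMul_transpose _ _
      _ = B *ᵥ (B *ᵥ x') := by rw [hBt]
  rw [← this]
  rfl

lemma inner_B_B (x : Esp d) :
    ⟪Matrix.toEuclideanCLM (𝕜 := ℝ) (Bmat d A hpos) x,
     Matrix.toEuclideanCLM (𝕜 := ℝ) (Bmat d A hpos) x⟫
    = A.mulVec (WithLp.equiv 2 (Fin d → ℝ) x) ⬝ᵥ (WithLp.equiv 2 (Fin d → ℝ) x) :=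
  inner_BB_gen d A _ (CFC.sqrt_nonneg A).posSemidef.1 (Bmat_mul_self d A hpos) x

end Mat

section Op
open Matrix
variable (A : Matrix (Fin d) (Fin d) ℝ) (hpos : A.PosDef)

def Sop : Hsp d →L[ℝ] Hsp d :=
  ContinuousLinearMap.compLpL 2 (μ01) (Matrix.toEuclideanCLM (𝕜 := ℝ) (Bmat d A hpos))

def Sinv : Hsp d →L[ℝ] Hsp d :=
  ContinuousLinearMap.compLpL 2 (μ01) (Matrix.toEuclideanCLM (𝕜 := ℝ) (Bmat d A hpos)⁻¹)

lemma Sinv_Sop (G : Hsp d) : Sinv d A hpos (Sop d A hpos G) = G := by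
  apply Lp.ext
  filter_upwards [ContinuousLinearMap.coeFn_compLpL (μ := μ01) (p := 2)
      (Matrix.toEuclideanCLM (𝕜 := ℝ) (Bmat d A hpos)⁻¹) (Sop d A hpos G),
    ContinuousLinearMap.coeFn_compLpL (μ := μ01) (p := 2)
      (Matrix.toEuclideanCLM (𝕜 := ℝ) (Bmat d A hpos)) G] with x h1 h2
  simp only [Sinv]
  rw [h1]
  simp only [Sop] at h2 ⊢
  rw [h2, ← ContinuousLinearMap.mul_apply, ← _root_.map_mul, Binv_mul, _root_.map_one,
    ContinuousLinearMap.one_apply]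

lemma norm_le_Sop (G : Hsp d) : ‖G‖ ≤ ‖Sinv d A hpos‖ * ‖Sop d A hpos G‖ := by
  conv_lhs => rw [← Sinv_Sop d A hpos G]
  exact (Sinv d A hpos).le_opNorm _

lemma coeFn_Sop (G : Hsp d) : Sop d A hpos G =ᵐ[μ01]
    fun x => Matrix.toEuclideanCLM (𝕜 := ℝ) (Bmat d A hpos) (G x) :=
  ContinuousLinearMap.coeFn_compLpL _ _

-- L4
open intervalIntegral in
lemma action_eq (G : Hsp d) :
    (∫ s in (0:ℝ)..1, (1 / 2 : ℝ) * (A.mulVec (WithLp.equiv 2 (Fin d → ℝ) (G s)) ⬝ᵥ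
        (WithLp.equiv 2 (Fin d → ℝ) (G s))))
      = (1/2 : ℝ) * ‖Sop d A hpos G‖ ^ 2 := by
  have h1 : ‖Sop d A hpos G‖ ^ 2 = ⟪Sop d A hpos G, Sop d A hpos G⟫ :=
    (real_inner_self_eq_norm_sq _).symm
  rw [h1, L2.inner_def]
  have h2 : ∫ x, ⟪(Sop d A hpos G) x, (Sop d A hpos G) x⟫ ∂(μ01)
      = ∫ x, (A.mulVec (WithLp.equiv 2 (Fin d → ℝ) (G x)) ⬝ᵥ
          (WithLp.equiv 2 (Fin d → ℝ) (G x))) ∂(μ01) := by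
    refine MeasureTheory.integral_congr_ae ?_
    filter_upwards [coeFn_Sop d A hpos G] with x hx
    rw [hx, inner_B_B]
  rw [h2]
  have h3 : ∫ x, (A.mulVec (WithLp.equiv 2 (Fin d → ℝ) (G x)) ⬝ᵥ
      (WithLp.equiv 2 (Fin d → ℝ) (G x))) ∂(μ01)
      = ∫ s in (0:ℝ)..1, (A.mulVec (WithLp.equiv 2 (Fin d → ℝ) (G s)) ⬝ᵥ
          (WithLp.equiv 2 (Fin d → ℝ) (G s))) := by
    rw [← setIntegral_eq_interval _ le_rfl zero_le_one le_rfl]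
    simp only [μ01]
    rw [Measure.restrict_restrict measurableSet_Ioc,
      Set.inter_eq_self_of_subset_left Set.Ioc_subset_Icc_self]
    exact integral_Icc_eq_integral_Ioc
  rw [intervalIntegral.integral_const_mul, h3]
end Op

section Dset
variable (A : Matrix (Fin d) (Fin d) ℝ) (hpos : A.PosDef)

def rr : ℝ := ‖Sinv d A hpos‖ * Real.sqrt 2

def Dset : Set (WeakDual ℝ (Hsp d)) :=
  (WeakDual.toStrongDual ⁻¹' Metric.closedBall 0 (rr d A hpos)) ∩
    ⋂ F : Hsp d, {φ : WeakDual ℝ (Hsp d) |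
      φ ((ContinuousLinearMap.adjoint (Sop d A hpos)) (Sop d A hpos F))
        ≤ Real.sqrt 2 * ‖Sop d A hpos F‖}

lemma isCompact_Dset : IsCompact (Dset d A hpos) :=
  (WeakDual.isCompact_closedBall (𝕜 := ℝ) (E := Hsp d) 0 (rr d A hpos)).inter_right
    (isClosed_iInter fun F => isClosed_le (WeakDual.eval_continuous _) continuous_const)

lemma toDual_mem_Dset (G : Hsp d) (hG : ‖Sop d A hpos G‖ ≤ Real.sqrt 2) :
    StrongDual.toWeakDual (InnerProductSpace.toDual ℝ (Hsp d) G) ∈ Dset d A hpos := by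
  constructor
  · simp only [Set.mem_preimage, Metric.mem_closedBall, dist_zero_right]
    have h1 : ‖WeakDual.toStrongDual (StrongDual.toWeakDual
        (InnerProductSpace.toDual ℝ (Hsp d) G))‖ = ‖G‖ :=
      (InnerProductSpace.toDual ℝ (Hsp d)).norm_map G
    rw [h1]
    calc ‖G‖ ≤ ‖Sinv d A hpos‖ * ‖Sop d A hpos G‖ := norm_le_Sop d A hpos G
      _ ≤ ‖Sinv d A hpos‖ * Real.sqrt 2 :=
        mul_le_mul_of_nonneg_left hG (norm_nonneg _)
      _ = rr d A hpos := rfl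
  · refine Set.mem_iInter.2 fun F => ?_
    show (InnerProductSpace.toDual ℝ (Hsp d) G)
      ((ContinuousLinearMap.adjoint (Sop d A hpos)) (Sop d A hpos F)) ≤ _
    rw [InnerProductSpace.toDual_apply_apply, ContinuousLinearMap.adjoint_inner_right]
    calc ⟪Sop d A hpos G, Sop d A hpos F⟫ ≤ ‖Sop d A hpos G‖ * ‖Sop d A hpos F‖ :=
        real_inner_le_norm _ _
      _ ≤ Real.sqrt 2 * ‖Sop d A hpos F‖ :=
        mul_le_mul_of_nonneg_right hG (norm_nonneg _)

lemma mem_Dset_norm (φ : WeakDual ℝ (Hsp d)) (hφ : φ ∈ Dset d A hpos) :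
    ‖Sop d A hpos ((InnerProductSpace.toDual ℝ (Hsp d)).symm (WeakDual.toStrongDual φ))‖
      ≤ Real.sqrt 2 := by
  set G := (InnerProductSpace.toDual ℝ (Hsp d)).symm (WeakDual.toStrongDual φ) with hGdef
  have hF := Set.mem_iInter.1 hφ.2 G
  have heq : φ ((ContinuousLinearMap.adjoint (Sop d A hpos)) (Sop d A hpos G))
      = ⟪Sop d A hpos G, Sop d A hpos G⟫ := by
    rw [← ContinuousLinearMap.adjoint_inner_right]
    exact (InnerProductSpace.toDual_symm_apply (x := (ContinuousLinearMap.adjoint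
      (Sop d A hpos)) (Sop d A hpos G)) (y := WeakDual.toStrongDual φ)).symm
  rw [Set.mem_setOf_eq, heq, real_inner_self_eq_norm_sq] at hF
  nlinarith [norm_nonneg (Sop d A hpos G), Real.sqrt_nonneg 2, hF]
end Dset

lemma equicont_aux {ι : Type*} (F : ι → Set.Icc (0:ℝ) 1 → Esp d) (C : ℝ)
    (hC : ∀ i t u, dist (F i t) (F i u) ≤ C * Real.sqrt (dist (t:ℝ) (u:ℝ))) :
    Equicontinuous F := by
  intro t
  rw [Metric.equicontinuousAt_iff]
  intro ε hε
  have hCpos : (0:ℝ) < |C| + 1 := by positivity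
  refine ⟨(ε / (|C| + 1)) ^ 2, by positivity, fun u hu i => ?_⟩
  have h2 : Real.sqrt (dist (u:ℝ) (t:ℝ)) < ε / (|C| + 1) := by
    have hlt : dist (u:ℝ) (t:ℝ) < (ε / (|C| + 1)) ^ 2 := by
      refine lt_of_le_of_lt ?_ hu
      rw [Subtype.dist_eq u t]
    calc Real.sqrt (dist (u:ℝ) (t:ℝ)) < Real.sqrt ((ε / (|C| + 1)) ^ 2) :=
          Real.sqrt_lt_sqrt dist_nonneg hlt
      _ = ε / (|C| + 1) := by rw [Real.sqrt_sq (by positivity)]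
  calc dist (F i t) (F i u) ≤ C * Real.sqrt (dist (u:ℝ) (t:ℝ)) := by
        rw [dist_comm]; exact hC i u t
    _ ≤ (|C| + 1) * Real.sqrt (dist (u:ℝ) (t:ℝ)) := by
        have h3 := Real.sqrt_nonneg (dist (u:ℝ) (t:ℝ))
        have h4 : C ≤ |C| + 1 := (le_abs_self C).trans (by linarith)
        nlinarith
    _ < (|C| + 1) * (ε / (|C| + 1)) := mul_lt_mul_of_pos_left h2 hCpos
    _ = ε := by field_simp

end

/-- The sublevel set `{I' ≤ 1}` of the action functional
`I'(h) = ∫₀¹ (1/2)⟨Σ⁻¹ ḣ(t), ḣ(t)⟩ dt` (with `I' = +∞` off absolutely continuous paths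
starting at `0` with square-integrable derivative) is compact in `C₀([0,1]; ℝ^d)`
with the uniform topology. -/
theorem sublevel_set_of_action_functional_isCompact
    (d : ℕ) (A : Matrix (Fin d) (Fin d) ℝ) (hsymm : A.IsSymm) (hpos : A.PosDef) :
    IsCompact {h : C(Set.Icc (0 : ℝ) 1, EuclideanSpace ℝ (Fin d)) |
      h ⟨0, by norm_num⟩ = 0 ∧
      ∃ g : ℝ → EuclideanSpace ℝ (Fin d),
        MemLp g 2 (MeasureTheory.volume.restrict (Set.Icc (0 : ℝ) 1)) ∧
        (∀ t : Set.Icc (0 : ℝ) 1, h t = ∫ s in (0 : ℝ)..(t : ℝ), g s) ∧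
        (∫ s in (0 : ℝ)..1, (1 / 2) * (A.mulVec (g s) ⬝ᵥ g s)) ≤ 1} := by
  set K := {h : C(Set.Icc (0 : ℝ) 1, EuclideanSpace ℝ (Fin d)) |
      h ⟨0, by norm_num⟩ = 0 ∧
      ∃ g : ℝ → EuclideanSpace ℝ (Fin d),
        MemLp g 2 (MeasureTheory.volume.restrict (Set.Icc (0 : ℝ) 1)) ∧
        (∀ t : Set.Icc (0 : ℝ) 1, h t = ∫ s in (0 : ℝ)..(t : ℝ), g s) ∧
        (∫ s in (0 : ℝ)..1, (1 / 2) * (A.mulVec (g s) ⬝ᵥ g s)) ≤ 1} with hK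
  -- representation of elements of K
  have hKrep : ∀ h ∈ K, ∃ G : Hsp d, ‖G‖ ≤ rr d A hpos ∧
      ‖Sop d A hpos G‖ ≤ Real.sqrt 2 ∧
      ∀ t : Set.Icc (0:ℝ) 1, h t = Phi d (InnerProductSpace.toDual ℝ (Hsp d) G) t := by
    rintro h ⟨h0, g, hg, hrepr, hQ⟩
    have hg' : MemLp g 2 (μ01) := hg
    set G : Hsp d := hg'.toLp g with hGdef
    have hae : ∀ᵐ x ∂(volume : Measure ℝ), x ∈ Set.Icc (0:ℝ) 1 → (G : ℝ → Esp d) x = g x :=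
      (ae_restrict_iff' measurableSet_Icc).1 hg'.coeFn_toLp
    have hint : ∀ t : Set.Icc (0:ℝ) 1,
        (∫ s in (0:ℝ)..(t:ℝ), (G : ℝ → Esp d) s) = ∫ s in (0:ℝ)..(t:ℝ), g s := by
      intro t
      refine intervalIntegral.integral_congr_ae ?_
      filter_upwards [hae] with x hx hmem
      rw [Set.uIoc_of_le t.2.1] at hmem
      exact hx ⟨hmem.1.le, hmem.2.trans t.2.2⟩
    have hact : (∫ s in (0:ℝ)..1, (1/2:ℝ) *
          (A.mulVec ((G : ℝ → Esp d) s) ⬝ᵥ (G : ℝ → Esp d) s))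
        = ∫ s in (0:ℝ)..1, (1/2:ℝ) * (A.mulVec (g s) ⬝ᵥ g s) := by
      refine intervalIntegral.integral_congr_ae ?_
      filter_upwards [hae] with x hx hmem
      rw [Set.uIoc_of_le (zero_le_one)] at hmem
      rw [hx ⟨hmem.1.le, hmem.2⟩]
    have hrfl : (fun s => (1/2:ℝ) * (A.mulVec (WithLp.equiv 2 (Fin d → ℝ)
          ((G : ℝ → Esp d) s)) ⬝ᵥ (WithLp.equiv 2 (Fin d → ℝ) ((G : ℝ → Esp d) s))))
        = fun s => (1/2:ℝ) * (A.mulVec ((G : ℝ → Esp d) s) ⬝ᵥ (G : ℝ → Esp d) s) := rfl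
    have hSop2 : (1/2 : ℝ) * ‖Sop d A hpos G‖ ^ 2 ≤ 1 := by
      calc (1/2 : ℝ) * ‖Sop d A hpos G‖ ^ 2
          = ∫ s in (0:ℝ)..1, (1/2:ℝ) * (A.mulVec (WithLp.equiv 2 (Fin d → ℝ)
              ((G : ℝ → Esp d) s)) ⬝ᵥ (WithLp.equiv 2 (Fin d → ℝ) ((G : ℝ → Esp d) s))) :=
            (action_eq d A hpos G).symm
        _ = ∫ s in (0:ℝ)..1, (1/2:ℝ) *
              (A.mulVec ((G : ℝ → Esp d) s) ⬝ᵥ (G : ℝ → Esp d) s) := by rw [hrfl]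
        _ = ∫ s in (0:ℝ)..1, (1/2:ℝ) * (A.mulVec (g s) ⬝ᵥ g s) := hact
        _ ≤ 1 := hQ
    have hSG : ‖Sop d A hpos G‖ ≤ Real.sqrt 2 := by
      have h2 : ‖Sop d A hpos G‖ ^ 2 ≤ 2 := by linarith
      calc ‖Sop d A hpos G‖ = Real.sqrt (‖Sop d A hpos G‖ ^ 2) :=
            (Real.sqrt_sq (norm_nonneg _)).symm
        _ ≤ Real.sqrt 2 := Real.sqrt_le_sqrt h2
    refine ⟨G, ?_, hSG, ?_⟩
    · calc ‖G‖ ≤ ‖Sinv d A hpos‖ * ‖Sop d A hpos G‖ := norm_le_Sop d A hpos G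
        _ ≤ ‖Sinv d A hpos‖ * Real.sqrt 2 := mul_le_mul_of_nonneg_left hSG (norm_nonneg _)
        _ = rr d A hpos := rfl
    · intro t
      rw [Phi_toDual, setIntegral_eq_interval _ le_rfl t.2.1 t.2.2, hint t]
      exact hrepr t
  -- image identification
  have himg1 : ContinuousMap.toFun '' K ⊆ Phi d '' Dset d A hpos := by
    rintro _ ⟨h, hh, rfl⟩
    obtain ⟨G, hGr, hSG, hrep⟩ := hKrep h hh
    exact ⟨_, toDual_mem_Dset d A hpos G hSG, by funext t; exact (hrep t).symm⟩
  have himg2 : Phi d '' Dset d A hpos ⊆ ContinuousMap.toFun '' K := by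
    rintro _ ⟨φ, hφ, rfl⟩
    set G : Hsp d := (InnerProductSpace.toDual ℝ (Hsp d)).symm (WeakDual.toStrongDual φ)
      with hGdef
    have hSG := mem_Dset_norm d A hpos φ hφ
    have hφG : φ = (InnerProductSpace.toDual ℝ (Hsp d)) G := by
      rw [hGdef]
      exact ((InnerProductSpace.toDual ℝ (Hsp d)).apply_symm_apply _).symm
    have hcont : Continuous fun t => Phi d φ t := by
      rw [hφG]; exact continuous_Phi_toDual d G
    have hS2 : ‖Sop d A hpos G‖ ^ 2 ≤ 2 := by
      have := pow_le_pow_left₀ (norm_nonneg _) hSG 2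
      rwa [Real.sq_sqrt (by norm_num : (0:ℝ) ≤ 2)] at this
    refine ⟨⟨fun t => Phi d φ t, hcont⟩, ⟨?_, (G : ℝ → Esp d), Lp.memLp G, ?_, ?_⟩, rfl⟩
    · show Phi d φ _ = 0
      rw [hφG, Phi_toDual]
      norm_num [Set.Ioc_self]
    · intro t
      show Phi d φ t = _
      rw [hφG, Phi_toDual, setIntegral_eq_interval _ le_rfl t.2.1 t.2.2]
    · calc (∫ s in (0:ℝ)..1, (1/2:ℝ) * (A.mulVec ((G : ℝ → Esp d) s) ⬝ᵥ (G : ℝ → Esp d) s))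
          = (1/2 : ℝ) * ‖Sop d A hpos G‖ ^ 2 := action_eq d A hpos G
        _ ≤ 1 := by linarith
  have himg : ContinuousMap.toFun '' K = Phi d '' Dset d A hpos :=
    Set.Subset.antisymm himg1 himg2
  apply ArzelaAscoli.isCompact_of_equicontinuous
  · rw [himg]
    exact (isCompact_Dset d A hpos).image (continuous_Phi d)
  · refine equicont_aux d _ (rr d A hpos) ?_
    rintro ⟨h, hh⟩ t u
    obtain ⟨G, hGr, hSG, hrep⟩ := hKrep h hh
    show dist (h t) (h u) ≤ _
    rw [hrep t, hrep u]
    exact le_trans (Phi_dist d G t u)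
      (mul_le_mul_of_nonneg_right hGr (Real.sqrt_nonneg _))
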